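/- (Condition (C7) for G^κ.) Let Θ be a nonempty measurable set of Lévy triplets with 𝒦 := sup_{(b,c,F)∈Θ} { ∫_{ℝ^d} |z|∧|z|² F(dz) + |b| + |c| } < ∞, and let G^κ, κ ∈ (0,1), be the associated approximating nonlinearities. Let (t,x,p,q) ∈ (0,∞)×ℝ^d×ℝ^d×S^d, let f be a bounded upper or lower semicontinuous function on (0,∞)×ℝ^d, and let f_n, g ∈ C^{1,2}_b((0,∞)×ℝ^d) be such that f_n(t,·) → f(t,·) locally uniformly on ℝ^d and (f_n)_{n∈ℕ} is uniformly bounded. Then, for all κ ∈ (0,1), G^κ(p, q, f_n(t,x+·), g(t,x+·)) → G^κ(p, q, f(t,x+·), g(t,x+·)). -/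

import Mathlib

open MeasureTheory Filter Set
open scoped NNReal ENNReal Topology

noncomputable section

/-- Euclidean space `ℝ^d`. -/
abbrev Eu (d : ℕ) : Type := EuclideanSpace ℝ (Fin d)

/-- Matrices carry the product (= Borel) σ-algebra. -/
instance matrixMeasurableSpace {d : ℕ} : MeasurableSpace (Matrix (Fin d) (Fin d) ℝ) :=
  inferInstanceAs (MeasurableSpace (Fin d → Fin d → ℝ))

/-- The truncation function `h(z) = z 1_{|z| ≤ 1}`. -/
def trunc {d : ℕ} (z : Eu d) : Eu d := if ‖z‖ ≤ 1 then z else 0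

/-- `F` is a Lévy measure on `ℝ^d`: `F({0}) = 0` and `∫ |z|² ∧ 1 F(dz) < ∞`. -/
def IsLevyMeasure {d : ℕ} (F : Measure (Eu d)) : Prop :=
  F {0} = 0 ∧ (∫⁻ z, ENNReal.ofReal (min (‖z‖ ^ 2) 1) ∂F) < ⊤

/-- `Θ` is a set of Lévy triplets `(b, c, F)`: `c` is symmetric nonnegative definite and
`F` is a Lévy measure. -/
def IsLevyTripletSet {d : ℕ}
    (Θ : Set (Eu d × Matrix (Fin d) (Fin d) ℝ × Measure (Eu d))) : Prop :=
  ∀ x ∈ Θ, x.2.1.PosSemidef ∧ IsLevyMeasure x.2.2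

/-- The condition `𝒦 = sup_{(b,c,F) ∈ Θ} { ∫ |z| ∧ |z|² F(dz) + |b| + |c| } < ∞`. -/
def HasUniformBound {d : ℕ}
    (Θ : Set (Eu d × Matrix (Fin d) (Fin d) ℝ × Measure (Eu d))) : Prop :=
  ∃ K : ℝ≥0, ∀ x ∈ Θ,
    (∫⁻ z, ENNReal.ofReal (min ‖z‖ (‖z‖ ^ 2)) ∂x.2.2)
      + ENNReal.ofReal ‖x.1‖ + ∑ i, ∑ j, ENNReal.ofReal |x.2.1 i j| ≤ K

/-- The condition `𝒦_ε := sup_{F ∈ Θ₃} ∫_{|z| ≤ ε} |z|² F(dz) → 0` as `ε ↓ 0`. -/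
def HasVanishingSmallJumps {d : ℕ}
    (Θ : Set (Eu d × Matrix (Fin d) (Fin d) ℝ × Measure (Eu d))) : Prop :=
  Tendsto (fun ε : ℝ => ⨆ x ∈ Θ, ∫⁻ z in {z : Eu d | ‖z‖ ≤ ε},
      ((‖z‖₊ : ℝ≥0∞) ^ 2) ∂x.2.2)
    (nhdsWithin 0 (Set.Ioi 0)) (nhds 0)

/-- The nonlinearity
`G(p,q,f) = sup_{(b,c,F) ∈ Θ} { p·b + ½ tr[q c] + ∫ [f(z) - f(0) - D f(0)·h(z)] F(dz) }`. -/
def Gop {d : ℕ} (Θ : Set (Eu d × Matrix (Fin d) (Fin d) ℝ × Measure (Eu d)))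
    (p : Eu d) (q : Matrix (Fin d) (Fin d) ℝ) (f : Eu d → ℝ) : ℝ :=
  sSup {r : ℝ | ∃ x ∈ Θ,
    r = (∑ i, p i * x.1 i) + (1 / 2) * (q * x.2.1).trace
      + ∫ z, (f z - f 0 - fderiv ℝ f 0 (trunc z)) ∂x.2.2}

/-- The approximating nonlinearity `G^κ(p,q,f,g)`, where jumps of size `≤ κ` are handled
with the test function `g` and jumps of size `> κ` with `f`. -/
def Gkop {d : ℕ} (Θ : Set (Eu d × Matrix (Fin d) (Fin d) ℝ × Measure (Eu d)))
    (κ : ℝ) (p : Eu d) (q : Matrix (Fin d) (Fin d) ℝ) (f g : Eu d → ℝ) : ℝ :=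
  sSup {r : ℝ | ∃ x ∈ Θ,
    r = (∑ i, p i * x.1 i) + (1 / 2) * (q * x.2.1).trace
      + (∫ z in {z : Eu d | κ < ‖z‖}, (f z - f 0 - fderiv ℝ g 0 (trunc z)) ∂x.2.2)
      + (∫ z in {z : Eu d | ‖z‖ ≤ κ}, (g z - g 0 - fderiv ℝ g 0 (trunc z)) ∂x.2.2)}

/-- `f ∈ C^{1,2}((0,∞) × ℝ^d)`: jointly continuous, continuously differentiable in `t`
and twice continuously differentiable in `x` on `(0,∞) × ℝ^d`. -/
def IsC12 {d : ℕ} (f : ℝ → Eu d → ℝ) : Prop :=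
  ContinuousOn (fun pt : ℝ × Eu d => f pt.1 pt.2) (Set.Ioi 0 ×ˢ Set.univ) ∧
  (∀ x, ContDiffOn ℝ 1 (fun t => f t x) (Set.Ioi 0)) ∧
  (∀ t ∈ Set.Ioi (0 : ℝ), ContDiff ℝ 2 (f t)) ∧
  ContinuousOn (fun pt : ℝ × Eu d => fderiv ℝ (f pt.1) pt.2) (Set.Ioi 0 ×ˢ Set.univ) ∧
  ContinuousOn (fun pt : ℝ × Eu d => fderiv ℝ (fderiv ℝ (f pt.1)) pt.2)
    (Set.Ioi 0 ×ˢ Set.univ)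

/-- `f ∈ C_b^{1,2}((0,∞) × ℝ^d)`: `f ∈ C^{1,2}` with `f` and its derivatives bounded. -/
def IsC12b {d : ℕ} (f : ℝ → Eu d → ℝ) : Prop :=
  IsC12 f ∧
  ∃ C : ℝ, ∀ t ∈ Set.Ioi (0 : ℝ), ∀ x,
    |f t x| ≤ C ∧ |deriv (fun s => f s x) t| ≤ C ∧
    ‖fderiv ℝ (f t) x‖ ≤ C ∧ ‖fderiv ℝ (fderiv ℝ (f t)) x‖ ≤ C

/-- `f` is a bounded semicontinuous (upper or lower) function on `(0,∞) × ℝ^d`. -/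
def IsBoundedSC {d : ℕ} (f : ℝ → Eu d → ℝ) : Prop :=
  (UpperSemicontinuousOn (fun pt : ℝ × Eu d => f pt.1 pt.2) (Set.Ioi 0 ×ˢ Set.univ) ∨
    LowerSemicontinuousOn (fun pt : ℝ × Eu d => f pt.1 pt.2) (Set.Ioi 0 ×ˢ Set.univ)) ∧
  ∃ C : ℝ, ∀ t ∈ Set.Ioi (0 : ℝ), ∀ x, |f t x| ≤ C

/-!
For each triplet `(b, c, F)` the two objective functionals differ only in the large-jump
integral `∫_{|z|>κ} [(fₙ - f)(x+z) - (fₙ - f)(x)] F(dz)`, and a bound on this difference that is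
uniform over `Θ` bounds the difference of the suprema. The moment bound `𝒦` gives
`F{|z| > r} ≤ 𝒦 / min(r, r²)` for every `F` in `Θ`, so the measures `F` restricted to
`{|z| > κ}` have uniformly bounded mass and uniformly small tails. Splitting the integral into a
large ball, where `fₙ → f` uniformly, and its complement, where the integrand is bounded, gives
convergence uniformly over `Θ`.
-/

/-- No boundedness is assumed: the hypothesis makes the two sets both bounded above or both
unbounded, and in the latter case both suprema are the junk value `0`. -/
lemma abs_sSup_sub_sSup_le {α : Type*} {Θ : Set α} {u w : α → ℝ} {ε : ℝ} (hε : 0 ≤ ε)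
    (h : ∀ θ ∈ Θ, |u θ - w θ| ≤ ε) :
    |sSup {r | ∃ θ ∈ Θ, r = u θ} - sSup {r | ∃ θ ∈ Θ, r = w θ}| ≤ ε := by
  have image_eq : ∀ v : α → ℝ, {r | ∃ θ ∈ Θ, r = v θ} = v '' Θ := fun v => by
    ext r; simp [eq_comm]
  rw [image_eq, image_eq]
  rcases Θ.eq_empty_or_nonempty with rfl | hne
  · simpa using hε
  have upper : ∀ a b : α → ℝ, (∀ θ ∈ Θ, a θ ≤ b θ + ε) → BddAbove (b '' Θ) →
      sSup (b '' Θ) + ε ∈ upperBounds (a '' Θ) := fun a b hab hb =>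
    forall_mem_image.2 fun θ hθ =>
      (hab θ hθ).trans (add_le_add_left (le_csSup hb (mem_image_of_mem _ hθ)) ε)
  have huw : ∀ θ ∈ Θ, u θ ≤ w θ + ε := fun θ hθ => by linarith [(abs_le.1 (h θ hθ)).2]
  have hwu : ∀ θ ∈ Θ, w θ ≤ u θ + ε := fun θ hθ => by linarith [(abs_le.1 (h θ hθ)).1]
  by_cases hw : BddAbove (w '' Θ)
  · have hu : BddAbove (u '' Θ) := ⟨_, upper u w huw hw⟩
    rw [abs_sub_le_iff]
    constructor
    · linarith [csSup_le (hne.image u) (upper u w huw hw)]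
    · linarith [csSup_le (hne.image w) (upper w u hwu hu)]
  · have hu : ¬BddAbove (u '' Θ) := fun hu => hw ⟨_, upper w u hwu hu⟩
    simpa [Real.sSup_of_not_bddAbove hw, Real.sSup_of_not_bddAbove hu] using hε

section LevyMoment

variable {E : Type*} [NormedAddCommGroup E] [MeasurableSpace E] [OpensMeasurableSpace E]

lemma measure_lt_norm_le {μ : Measure E} {K : ℝ≥0}
    (hμ : ∫⁻ z, ENNReal.ofReal (min ‖z‖ (‖z‖ ^ 2)) ∂μ ≤ K) {r : ℝ} (hr : 0 < r) :
    μ {z | r < ‖z‖} ≤ ENNReal.ofReal (K / min r (r ^ 2)) := by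
  have hm : 0 < min r (r ^ 2) := lt_min hr (pow_pos hr 2)
  calc μ {z | r < ‖z‖}
      ≤ μ {z | ENNReal.ofReal (min r (r ^ 2)) ≤ ENNReal.ofReal (min ‖z‖ (‖z‖ ^ 2))} :=
        measure_mono fun z hz => ENNReal.ofReal_le_ofReal <|
          min_le_min (le_of_lt hz) (pow_le_pow_left₀ hr.le (le_of_lt hz) 2)
    _ ≤ (∫⁻ z, ENNReal.ofReal (min ‖z‖ (‖z‖ ^ 2)) ∂μ) / ENNReal.ofReal (min r (r ^ 2)) :=
        meas_ge_le_lintegral_div (by fun_prop) (ENNReal.ofReal_pos.2 hm).ne' ENNReal.ofReal_ne_top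
    _ ≤ K / ENNReal.ofReal (min r (r ^ 2)) := by gcongr
    _ = ENNReal.ofReal (K / min r (r ^ 2)) := by
        rw [ENNReal.ofReal_div_of_pos hm, ENNReal.ofReal_coe_nnreal]

lemma exists_forall_measure_lt_norm_le (K : ℝ≥0) {ε : ℝ} (hε : 0 < ε) :
    ∃ R, ∀ μ : Measure E, ∫⁻ z, ENNReal.ofReal (min ‖z‖ (‖z‖ ^ 2)) ∂μ ≤ K →
      μ {z | R < ‖z‖} ≤ ENNReal.ofReal ε := by
  set R := max 1 (K / ε)
  have hR : 1 ≤ R := le_max_left _ _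
  have hKR : (K : ℝ) ≤ ε * R := by
    have := le_max_right 1 (K / ε)
    rwa [div_le_iff₀ hε, mul_comm] at this
  refine ⟨R, fun μ hμ => (measure_lt_norm_le hμ (by positivity)).trans ?_⟩
  rw [min_eq_left (by nlinarith)]
  exact ENNReal.ofReal_le_ofReal ((div_le_iff₀ (by positivity)).2 hKR)

end LevyMoment

section UniformIntegralConvergence

variable {E : Type*} [NormedAddCommGroup E] [MeasurableSpace E] [OpensMeasurableSpace E]

lemma abs_integral_le_of_abs_le_on_closedBall {μ : Measure E} [IsFiniteMeasure μ] {e : E → ℝ}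
    {B η R : ℝ} (hη : 0 ≤ η) (hB : ∀ z, |e z| ≤ B)
    (hball : ∀ z ∈ Metric.closedBall (0 : E) R, |e z| ≤ η) :
    |∫ z, e z ∂μ| ≤ η * μ.real univ + B * μ.real {z | R < ‖z‖} := by
  have hS : MeasurableSet {z : E | R < ‖z‖} := measurableSet_lt measurable_const measurable_norm
  have hbound : ∀ z, ‖e z‖ ≤ η + {z : E | R < ‖z‖}.indicator (fun _ => B) z := fun z => by
    by_cases hz : R < ‖z‖
    · rw [indicator_of_mem (show z ∈ {z : E | R < ‖z‖} from hz), Real.norm_eq_abs]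
      linarith [hB z]
    · rw [indicator_of_notMem (show z ∉ {z : E | R < ‖z‖} from hz), add_zero]
      exact hball z (by simpa using hz)
  calc |∫ z, e z ∂μ| ≤ ∫ z, (η + {z : E | R < ‖z‖}.indicator (fun _ => B) z) ∂μ :=
        norm_integral_le_of_norm_le ((integrable_const η).add
          ((integrable_const B).indicator hS)) (ae_of_all _ hbound)
    _ = η * μ.real univ + B * μ.real {z | R < ‖z‖} := by
        rw [integral_add (integrable_const η) ((integrable_const B).indicator hS),
          integral_const, integral_indicator_const B hS, smul_eq_mul, smul_eq_mul,
          mul_comm η, mul_comm B]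

theorem tendstoUniformly_integral_sub_of_tendstoLocallyUniformly [ProperSpace E]
    {ι β : Type*} {l : Filter β} {μ : ι → Measure E} {M B : ℝ≥0}
    (hM : ∀ i, μ i univ ≤ M)
    (htight : ∀ ε > 0, ∃ R, ∀ i, μ i {z | R < ‖z‖} ≤ ENNReal.ofReal ε)
    {φ : β → E → ℝ} {ψ : E → ℝ} (hB : ∀ n z, |φ n z - ψ z| ≤ B)
    (hφ : TendstoLocallyUniformly φ ψ l) :
    TendstoUniformly (fun n i => ∫ z, (φ n z - ψ z) ∂μ i) 0 l := by
  rw [Metric.tendstoUniformly_iff]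
  intro ε hε
  obtain ⟨R, hR⟩ := htight (ε / 2 / (B + 1)) (by positivity)
  have hball := (tendstoLocallyUniformly_iff_forall_isCompact.1 hφ) _
    (isCompact_closedBall (0 : E) R)
  filter_upwards [Metric.tendstoUniformlyOn_iff.1 hball (ε / 2 / (M + 1)) (by positivity)]
    with n hn i
  have : IsFiniteMeasure (μ i) := ⟨(hM i).trans_lt ENNReal.coe_lt_top⟩
  have hmass : (μ i).real univ ≤ M := ENNReal.toReal_le_coe_of_le_coe (hM i)
  have htail : (μ i).real {z | R < ‖z‖} ≤ ε / 2 / (B + 1) :=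
    ENNReal.toReal_le_of_le_ofReal (by positivity) (hR i)
  have hest := abs_integral_le_of_abs_le_on_closedBall (μ := μ i) (η := ε / 2 / (M + 1))
    (by positivity) (hB n) fun z hz => by rw [abs_sub_comm, ← Real.dist_eq]; exact (hn z hz).le
  rw [Pi.zero_apply, dist_zero_left, Real.norm_eq_abs]
  calc _ ≤ ε / 2 / (M + 1) * (μ i).real univ + B * (μ i).real {z | R < ‖z‖} := hest
    _ ≤ ε / 2 / (M + 1) * M + B * (ε / 2 / (B + 1)) := by gcongr
    _ = ε / 2 * (M / (M + 1)) + ε / 2 * (B / (B + 1)) := by ring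
    _ < ε / 2 * 1 + ε / 2 * 1 := by
        gcongr <;> exact (div_lt_one (by positivity)).2 (lt_add_one _)
    _ = ε := by ring

end UniformIntegralConvergence

lemma norm_trunc_le_one {d : ℕ} (z : Eu d) : ‖trunc z‖ ≤ 1 := by
  unfold trunc
  split_ifs with h
  · exact h
  · simp

lemma measurable_trunc {d : ℕ} : Measurable (trunc (d := d)) :=
  Measurable.ite (measurableSet_le measurable_norm measurable_const) measurable_id
    measurable_const

lemma integrable_sub_sub_trunc {d : ℕ} {μ : Measure (Eu d)} [IsFiniteMeasure μ]
    {f : Eu d → ℝ} (hf : Measurable f) {C : ℝ} (hC : ∀ z, |f z| ≤ C) (L : Eu d →L[ℝ] ℝ) :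
    Integrable (fun z => f z - f 0 - L (trunc z)) μ := by
  have hmeas : Measurable fun z => f z - f 0 - L (trunc z) :=
    (hf.sub_const _).sub (L.measurable.comp measurable_trunc)
  refine Integrable.of_bound hmeas.aestronglyMeasurable (C + C + ‖L‖) (ae_of_all _ fun z => ?_)
  have hL : ‖L (trunc z)‖ ≤ ‖L‖ :=
    (L.le_opNorm _).trans (mul_le_of_le_one_right (norm_nonneg L) (norm_trunc_le_one z))
  calc ‖f z - f 0 - L (trunc z)‖ ≤ ‖f z - f 0‖ + ‖L (trunc z)‖ := norm_sub_le _ _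
    _ ≤ ‖f z‖ + ‖f 0‖ + ‖L (trunc z)‖ := by gcongr; exact norm_sub_le _ _
    _ ≤ C + C + ‖L‖ := by
        gcongr
        · exact (Real.norm_eq_abs _).trans_le (hC z)
        · exact (Real.norm_eq_abs _).trans_le (hC 0)

lemma abs_Gkop_sub_Gkop_le {d : ℕ} {Θ : Set (Eu d × Matrix (Fin d) (Fin d) ℝ × Measure (Eu d))}
    {κ ε C : ℝ} (hε : 0 ≤ ε) (p : Eu d) (q : Matrix (Fin d) (Fin d) ℝ) {f₁ f₂ g : Eu d → ℝ}
    (hfin : ∀ θ ∈ Θ, θ.2.2 {z | κ < ‖z‖} ≠ ∞) (hf₁ : Measurable f₁) (hf₂ : Measurable f₂)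
    (hC₁ : ∀ z, |f₁ z| ≤ C) (hC₂ : ∀ z, |f₂ z| ≤ C)
    (h : ∀ θ ∈ Θ, |∫ z in {z | κ < ‖z‖}, (f₁ z - f₁ 0 - (f₂ z - f₂ 0)) ∂θ.2.2| ≤ ε) :
    |Gkop Θ κ p q f₁ g - Gkop Θ κ p q f₂ g| ≤ ε := by
  refine abs_sSup_sub_sSup_le hε fun θ hθ => ?_
  have := isFiniteMeasure_restrict.2 (hfin θ hθ)
  convert h θ hθ using 2
  rw [add_sub_add_right_eq_sub, add_sub_add_left_eq_sub, ← integral_sub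
    (integrable_sub_sub_trunc hf₁ hC₁ _) (integrable_sub_sub_trunc hf₂ hC₂ _)]
  congr 1 with z
  ring

lemma HasUniformBound.exists_measure_lt_norm_le {d : ℕ}
    {Θ : Set (Eu d × Matrix (Fin d) (Fin d) ℝ × Measure (Eu d))} (hK : HasUniformBound Θ) :
    ∃ K : ℝ≥0, (∀ θ ∈ Θ, ∀ r > 0, θ.2.2 {z | r < ‖z‖} ≤ ENNReal.ofReal (K / min r (r ^ 2))) ∧
      ∀ ε > 0, ∃ R, ∀ θ ∈ Θ, θ.2.2 {z | R < ‖z‖} ≤ ENNReal.ofReal ε := by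
  obtain ⟨K, hK⟩ := hK
  have hmoment : ∀ θ ∈ Θ, ∫⁻ z, ENNReal.ofReal (min ‖z‖ (‖z‖ ^ 2)) ∂θ.2.2 ≤ K := fun θ hθ =>
    (le_self_add.trans le_self_add).trans (hK θ hθ)
  exact ⟨K, fun θ hθ r hr => measure_lt_norm_le (hmoment θ hθ) hr, fun ε hε =>
    (exists_forall_measure_lt_norm_le K hε).imp fun _ hR θ hθ => hR _ (hmoment θ hθ)⟩

theorem HasUniformBound.tendstoUniformly_integral_sub {d : ℕ}
    {Θ : Set (Eu d × Matrix (Fin d) (Fin d) ℝ × Measure (Eu d))} (hK : HasUniformBound Θ)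
    {κ : ℝ} (hκ : 0 < κ) {β : Type*} {l : Filter β} {φ : β → Eu d → ℝ} {ψ : Eu d → ℝ}
    {B : ℝ≥0} (hB : ∀ n z, |φ n z - ψ z| ≤ B) (hφ : TendstoLocallyUniformly φ ψ l) :
    TendstoUniformly (fun n (θ : Θ) => ∫ z in {z | κ < ‖z‖}, (φ n z - ψ z) ∂θ.1.2.2) 0 l := by
  obtain ⟨K, hmass, htight⟩ := hK.exists_measure_lt_norm_le
  exact tendstoUniformly_integral_sub_of_tendstoLocallyUniformly
    (μ := fun θ : Θ => θ.1.2.2.restrict {z | κ < ‖z‖}) (M := (K / min κ (κ ^ 2)).toNNReal)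
    (fun θ => (Measure.restrict_apply_univ _).trans_le (hmass θ θ.2 κ hκ))
    (fun ε hε => (htight ε hε).imp fun _ hR θ => (Measure.restrict_apply_le _ _).trans (hR θ θ.2))
    hB hφ

theorem Gk_condition_C7_general {d : ℕ}
    (Θ : Set (Eu d × Matrix (Fin d) (Fin d) ℝ × Measure (Eu d)))
    (hK : HasUniformBound Θ)
    {t : ℝ} (ht : 0 < t) (x : Eu d) (p : Eu d)
    (q : Matrix (Fin d) (Fin d) ℝ)
    (f : ℝ → Eu d → ℝ)
    (fn : ℕ → ℝ → Eu d → ℝ) (g : ℝ → Eu d → ℝ)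
    (hfn : ∀ n, IsC12b (fn n))
    (hconv : TendstoLocallyUniformly (fun n y => fn n t y) (f t) atTop)
    (hub : ∃ C, ∀ n s y, |fn n s y| ≤ C) :
    ∀ κ ∈ Set.Ioo (0 : ℝ) 1,
      Tendsto (fun n => Gkop Θ κ p q (fun z => fn n t (x + z)) (fun z => g t (x + z)))
        atTop (nhds (Gkop Θ κ p q (fun z => f t (x + z)) (fun z => g t (x + z)))) := by
  rintro κ ⟨hκ, -⟩
  obtain ⟨K, hmass, -⟩ := hK.exists_measure_lt_norm_le
  obtain ⟨C, hC⟩ := hub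
  have hfn_meas : ∀ n, Measurable (fn n t) := fun n =>
    ((hfn n).1.2.2.1 t ht).continuous.measurable
  have hpt : ∀ y, Tendsto (fun n => fn n t y) atTop (𝓝 (f t y)) := fun y =>
    (tendstoLocallyUniformlyOn_univ.2 hconv).tendsto_at (mem_univ y)
  have hf_meas : Measurable (f t) :=
    measurable_of_tendsto_metrizable hfn_meas (tendsto_pi_nhds.2 hpt)
  have hf_bdd : ∀ y, |f t y| ≤ C := fun y => le_of_tendsto' (hpt y).abs fun n => hC n t y
  have hφ : TendstoLocallyUniformly (fun n z => fn n t (x + z) - fn n t (x + 0))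
      (fun z => f t (x + z) - f t (x + 0)) atTop :=
    (hconv.comp (x + ·) (continuous_const_add x)).sub
      (hpt (x + 0)).tendstoUniformly_const.tendstoLocallyUniformly
  have hB : ∀ n z, |(fn n t (x + z) - fn n t (x + 0)) - (f t (x + z) - f t (x + 0))|
      ≤ (4 * C).toNNReal := fun n z => by
    have := abs_le.1 (hC n t (x + z)); have := abs_le.1 (hC n t (x + 0))
    have := abs_le.1 (hf_bdd (x + z)); have := abs_le.1 (hf_bdd (x + 0))
    exact (abs_le.2 ⟨by linarith, by linarith⟩).trans (Real.le_coe_toNNReal _)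
  have hunif := hK.tendstoUniformly_integral_sub hκ hB hφ
  refine Metric.tendsto_nhds.2 fun ε hε => ?_
  filter_upwards [Metric.tendstoUniformly_iff.1 hunif (ε / 2) (half_pos hε)] with n hn
  rw [Real.dist_eq]
  refine (abs_Gkop_sub_Gkop_le (half_pos hε).le p q
    (fun θ hθ => ((hmass θ hθ κ hκ).trans_lt ENNReal.ofReal_lt_top).ne)
    ((hfn_meas n).comp (measurable_const_add x)) (hf_meas.comp (measurable_const_add x))
    (fun z => hC n t (x + z)) (fun z => hf_bdd (x + z))
    fun θ hθ => ?_).trans_lt (half_lt_self hε)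
  simpa [Real.dist_eq, abs_sub_comm] using (hn ⟨θ, hθ⟩).le

/-- **Statement 12** (Condition (C7) for `G^κ`): continuity of `G^κ` in its third argument
under locally uniform convergence of uniformly bounded test functions. -/
theorem Gk_condition_C7 {d : ℕ}
    (Θ : Set (Eu d × Matrix (Fin d) (Fin d) ℝ × Measure (Eu d)))
    (hne : Θ.Nonempty) (hmeas : MeasurableSet Θ) (htrip : IsLevyTripletSet Θ)
    (hK : HasUniformBound Θ)
    {t : ℝ} (ht : 0 < t) (x : Eu d) (p : Eu d)
    (q : Matrix (Fin d) (Fin d) ℝ) (hq : q.IsSymm)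
    (f : ℝ → Eu d → ℝ) (hf : IsBoundedSC f)
    (fn : ℕ → ℝ → Eu d → ℝ) (g : ℝ → Eu d → ℝ)
    (hfn : ∀ n, IsC12b (fn n)) (hg : IsC12b g)
    (hconv : TendstoLocallyUniformly (fun n y => fn n t y) (f t) atTop)
    (hub : ∃ C, ∀ n s y, |fn n s y| ≤ C) :
    ∀ κ ∈ Set.Ioo (0 : ℝ) 1,
      Tendsto (fun n => Gkop Θ κ p q (fun z => fn n t (x + z)) (fun z => g t (x + z)))
        atTop (nhds (Gkop Θ κ p q (fun z => f t (x + z)) (fun z => g t (x + z)))) :=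
  Gk_condition_C7_general Θ hK ht x p q f fn g hfn hconv hub
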